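/- arXiv:2305.16152 — 2 statements merged into one kernel-verified Lean document; each statement's English description precedes it below -/
import Mathlib

section
/- Let γ, γ' > 0 and let β be a γ-zero-gradient point with Var(V(β)) > 0. Then (γ/γ')·β is a γ'-zero-gradient point and Sharpe((γ/γ')·β) = Sharpe(β). In particular, the Sharpe ratio of a zero-gradient portfolio is independent of the risk aversion. -/
/-!
For `c ≥ 0`, positive homogeneity of `|·|` makes `R(c • β) = c R(β) + (1 - c) V₀` an affine
image of `R(β)`. For `c > 0` the signs `sign ⟨K_j, c • β⟩` and the null sets `{⟨K_j, c • β⟩ = 0}`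
do not change, while the centred value `R - E[R]` is multiplied by `c`; hence the first-order
condition for risk aversion `c γ` at `β` is the one for `γ` at `c • β`. Excess mean and standard
deviation of `V` are both multiplied by `c`, so the Sharpe ratio is unchanged.
-/

open MeasureTheory ProbabilityTheory
open scoped InnerProductSpace

/-- The random portfolio value `R(β) = V₀ + ⟨D, β⟩ − ν ∑_j |⟨K_j, β⟩|`. -/
noncomputable def Rport {Ω : Type*} {m q : ℕ} (V0 ν : ℝ)
    (D : Ω → EuclideanSpace ℝ (Fin m)) (K : Fin q → Ω → EuclideanSpace ℝ (Fin m))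
    (β : EuclideanSpace ℝ (Fin m)) (ω : Ω) : ℝ :=
  V0 + ⟪D ω, β⟫_ℝ - ν * ∑ j, |⟪K j ω, β⟫_ℝ|

/-- The terminal portfolio value `V(β) = R(β) · S₀`. -/
noncomputable def Vport {Ω : Type*} {m q : ℕ} (V0 S0 ν : ℝ)
    (D : Ω → EuclideanSpace ℝ (Fin m)) (K : Fin q → Ω → EuclideanSpace ℝ (Fin m))
    (β : EuclideanSpace ℝ (Fin m)) (ω : Ω) : ℝ :=
  Rport V0 ν D K β ω * S0

/-- The Sharpe ratio `Sharpe(β) = (E[V(β)] − V₀S₀)/√Var(V(β))`. -/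
noncomputable def sharpeRatio {Ω : Type*} [MeasurableSpace Ω] (P : Measure Ω) {m q : ℕ}
    (V0 S0 ν : ℝ) (D : Ω → EuclideanSpace ℝ (Fin m)) (K : Fin q → Ω → EuclideanSpace ℝ (Fin m))
    (β : EuclideanSpace ℝ (Fin m)) : ℝ :=
  ((∫ ω, Vport V0 S0 ν D K β ω ∂P) - V0 * S0) /
    Real.sqrt (variance (Vport V0 S0 ν D K β) P)

/-- The mean–variance objective `F_γ(β) = E[V(β)] − γ Var(V(β))`. -/
noncomputable def Fobj {Ω : Type*} [MeasurableSpace Ω] (P : Measure Ω) {m q : ℕ}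
    (V0 S0 ν : ℝ) (D : Ω → EuclideanSpace ℝ (Fin m)) (K : Fin q → Ω → EuclideanSpace ℝ (Fin m))
    (γ : ℝ) (β : EuclideanSpace ℝ (Fin m)) : ℝ :=
  (∫ ω, Vport V0 S0 ν D K β ω ∂P) - γ * variance (Vport V0 S0 ν D K β) P

/-- `β` is a `γ`-zero-gradient point: `P(⟨K_j, β⟩ = 0) = 0` for every `j` and
`E[(D − ν ∑_j sign(⟨K_j, β⟩) K_j) · S₀ · (1 − 2γS₀(R(β) − E[R(β)]))] = 0` in `ℝ^m`. -/
def ZeroGrad {Ω : Type*} [MeasurableSpace Ω] (P : Measure Ω) {m q : ℕ}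
    (V0 S0 ν : ℝ) (D : Ω → EuclideanSpace ℝ (Fin m)) (K : Fin q → Ω → EuclideanSpace ℝ (Fin m))
    (γ : ℝ) (β : EuclideanSpace ℝ (Fin m)) : Prop :=
  (∀ j, P {ω | ⟪K j ω, β⟫_ℝ = 0} = 0) ∧
  (∫ ω, (S0 * (1 - 2 * γ * S0 * (Rport V0 ν D K β ω - ∫ ω', Rport V0 ν D K β ω' ∂P))) •
      (D ω - ν • ∑ j, Real.sign ⟪K j ω, β⟫_ℝ • K j ω) ∂P) = 0

lemma Real.sign_mul_of_pos {c : ℝ} (hc : 0 < c) (x : ℝ) : Real.sign (c * x) = Real.sign x := by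
  rcases lt_trichotomy x 0 with hx | rfl | hx
  · rw [Real.sign_of_neg hx, Real.sign_of_neg (mul_neg_of_pos_of_neg hc hx)]
  · rw [mul_zero]
  · rw [Real.sign_of_pos hx, Real.sign_of_pos (mul_pos hc hx)]

lemma integral_const_mul_add_const {Ω : Type*} [MeasurableSpace Ω] {P : Measure Ω}
    [IsProbabilityMeasure P] {X : Ω → ℝ} (hX : Integrable X P) (c d : ℝ) :
    ∫ ω, (c * X ω + d) ∂P = c * ∫ ω, X ω ∂P + d := by
  rw [integral_add (hX.const_mul c) (integrable_const d), integral_const_mul, integral_const,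
    probReal_univ, one_smul]

section Portfolio

variable {Ω : Type*} {m q : ℕ} {V0 ν : ℝ} {D : Ω → EuclideanSpace ℝ (Fin m)}
  {K : Fin q → Ω → EuclideanSpace ℝ (Fin m)}

lemma Rport_smul {c : ℝ} (hc : 0 ≤ c) (β : EuclideanSpace ℝ (Fin m)) (ω : Ω) :
    Rport V0 ν D K (c • β) ω = c * Rport V0 ν D K β ω + (1 - c) * V0 := by
  simp only [Rport, real_inner_smul_right, abs_mul, abs_of_nonneg hc, ← Finset.mul_sum]
  ring

lemma Vport_smul {S0 c : ℝ} (hc : 0 ≤ c) (β : EuclideanSpace ℝ (Fin m)) :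
    Vport V0 S0 ν D K (c • β) = fun ω => c * Vport V0 S0 ν D K β ω + (1 - c) * (V0 * S0) := by
  ext ω
  simp only [Vport, Rport_smul hc]
  ring

variable [MeasurableSpace Ω] {P : Measure Ω}

lemma integrable_Rport [IsFiniteMeasure P] (hD : Integrable D P) (hK : ∀ j, Integrable (K j) P)
    (β : EuclideanSpace ℝ (Fin m)) : Integrable (Rport V0 ν D K β) P :=
  ((integrable_const V0).add (hD.inner_const β)).sub
    ((integrable_finsetSum _ fun j _ => ((hK j).inner_const β).abs).const_mul ν)

variable [IsProbabilityMeasure P]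

lemma Rport_smul_sub_integral (hD : Integrable D P) (hK : ∀ j, Integrable (K j) P) {c : ℝ}
    (hc : 0 ≤ c) (β : EuclideanSpace ℝ (Fin m)) (ω : Ω) :
    Rport V0 ν D K (c • β) ω - ∫ ω', Rport V0 ν D K (c • β) ω' ∂P =
      c * (Rport V0 ν D K β ω - ∫ ω', Rport V0 ν D K β ω' ∂P) := by
  simp only [Rport_smul hc, integral_const_mul_add_const (integrable_Rport hD hK β)]
  ring

theorem ZeroGrad.smul {S0 : ℝ} (hD : Integrable D P) (hK : ∀ j, Integrable (K j) P)
    {c γ : ℝ} (hc : 0 < c) {β : EuclideanSpace ℝ (Fin m)}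
    (h : ZeroGrad P V0 S0 ν D K (c * γ) β) : ZeroGrad P V0 S0 ν D K γ (c • β) := by
  obtain ⟨hnull, hgrad⟩ := h
  refine ⟨fun j => ?_, ?_⟩
  · simpa only [real_inner_smul_right, mul_eq_zero, hc.ne', false_or] using hnull j
  · simp only [Rport_smul_sub_integral hD hK hc.le, real_inner_smul_right,
      Real.sign_mul_of_pos hc]
    convert hgrad using 5
    ring

theorem sharpeRatio_smul {S0 : ℝ} (hD : Integrable D P) (hK : ∀ j, Integrable (K j) P)
    {c : ℝ} (hc : 0 < c) (β : EuclideanSpace ℝ (Fin m)) :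
    sharpeRatio P V0 S0 ν D K (c • β) = sharpeRatio P V0 S0 ν D K β := by
  have hVi : Integrable (Vport V0 S0 ν D K β) P := (integrable_Rport hD hK β).mul_const S0
  rw [sharpeRatio, sharpeRatio, Vport_smul hc.le, integral_const_mul_add_const hVi,
    variance_add_const (hVi.aestronglyMeasurable.const_mul c), variance_const_mul,
    Real.sqrt_mul (sq_nonneg c), Real.sqrt_sq hc.le,
    show c * ∫ ω, Vport V0 S0 ν D K β ω ∂P + (1 - c) * (V0 * S0) - V0 * S0 =
      c * ((∫ ω, Vport V0 S0 ν D K β ω ∂P) - V0 * S0) by ring,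
    mul_div_mul_left _ _ hc.ne']

end Portfolio

theorem stmt8_general {Ω : Type*} [MeasurableSpace Ω] (P : Measure Ω) [IsProbabilityMeasure P]
    {m q : ℕ}
    (V0 S0 ν : ℝ)
    (D : Ω → EuclideanSpace ℝ (Fin m)) (K : Fin q → Ω → EuclideanSpace ℝ (Fin m))
    (hD : MemLp D 2 P) (hK : ∀ j, MemLp (K j) 2 P)
    (γ γ' : ℝ) (hγ : 0 < γ) (hγ' : 0 < γ')
    (β : EuclideanSpace ℝ (Fin m)) (hzg : ZeroGrad P V0 S0 ν D K γ β) :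
    ZeroGrad P V0 S0 ν D K γ' ((γ / γ') • β) ∧
    sharpeRatio P V0 S0 ν D K ((γ / γ') • β) = sharpeRatio P V0 S0 ν D K β := by
  have hc : 0 < γ / γ' := div_pos hγ hγ'
  have hDi : Integrable D P := hD.integrable one_le_two
  have hKi : ∀ j, Integrable (K j) P := fun j => (hK j).integrable one_le_two
  refine ⟨ZeroGrad.smul hDi hKi hc ?_, sharpeRatio_smul hDi hKi hc β⟩
  rwa [div_mul_cancel₀ γ hγ'.ne']

/-- if `β` is a `γ`-zero-gradient point with positive variance, then `(γ/γ')·β`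
is a `γ'`-zero-gradient point with the same Sharpe ratio. -/
theorem stmt8 {Ω : Type*} [MeasurableSpace Ω] (P : Measure Ω) [IsProbabilityMeasure P]
    {m q : ℕ} (hm : 0 < m) (hq : 0 < q)
    (V0 S0 ν : ℝ) (hV0 : 0 < V0) (hS0 : 0 < S0) (hν : 0 ≤ ν)
    (D : Ω → EuclideanSpace ℝ (Fin m)) (K : Fin q → Ω → EuclideanSpace ℝ (Fin m))
    (hD : MemLp D 2 P) (hK : ∀ j, MemLp (K j) 2 P)
    (γ γ' : ℝ) (hγ : 0 < γ) (hγ' : 0 < γ')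
    (β : EuclideanSpace ℝ (Fin m)) (hzg : ZeroGrad P V0 S0 ν D K γ β)
    (hvar : 0 < variance (Vport V0 S0 ν D K β) P) :
    ZeroGrad P V0 S0 ν D K γ' ((γ / γ') • β) ∧
    sharpeRatio P V0 S0 ν D K ((γ / γ') • β) = sharpeRatio P V0 S0 ν D K β :=
  stmt8_general P V0 S0 ν D K hD hK γ γ' hγ hγ' β hzg
end

section
/- The function (β, θ) ↦ G_γ(β, θ) is differentiable on Z × ℝ and its gradient is obtained by differentiating under the expectation: for every (β, θ) ∈ Z × ℝ, ∇_β G_γ(β, θ) = E[(D − ν ∑_{j=1}^q sign(⟨K_j, β⟩)·K_j)·S₀·(1 − 2γS₀(R(β) − θ))] and ∂_θ G_γ(β, θ) = 2γ·S₀²·(E[R(β)] − θ). -/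
open MeasureTheory ProbabilityTheory
open scoped InnerProductSpace

/-- The objective `G_γ(β, θ) = E[R(β)·S₀ − γ((R(β) − θ)·S₀)²]`. -/
noncomputable def Gobj {Ω : Type*} [MeasurableSpace Ω] (P : Measure Ω) {m q : ℕ}
    (V0 S0 ν : ℝ) (D : Ω → EuclideanSpace ℝ (Fin m)) (K : Fin q → Ω → EuclideanSpace ℝ (Fin m))
    (γ : ℝ) (β : EuclideanSpace ℝ (Fin m)) (θ : ℝ) : ℝ :=
  ∫ ω, (Rport V0 ν D K β ω * S0 - γ * ((Rport V0 ν D K β ω - θ) * S0) ^ 2) ∂P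

/-!
Expanding the square, `G_γ(β, θ) = S₀ E[R(β)] − γ S₀² (E[R(β)²] − 2θ E[R(β)] + θ²)`, so it suffices
to differentiate the first two moments of `R(β)` in `β`. For every `ω`, `β ↦ R(β)(ω)` is Lipschitz
with constant `L(ω) = ‖D(ω)‖ + |ν| ∑_j ‖K_j(ω)‖ ∈ L²`, and it is differentiable at `β` as soon as no
`⟨K_j(ω), β⟩` vanishes, which holds almost surely on `Z`. Dominated differentiation under the
integral then applies to `E[R]` (dominated by `L`) and to `E[R²]` (dominated near `β` by
`L (2|R(β)| + L)`, from `R(b)² − R(β)² = (R(b) − R(β)) (R(b) + R(β))`).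
-/

theorem Real.measurable_sign : Measurable Real.sign :=
  measurable_const.ite measurableSet_Iio (measurable_const.ite measurableSet_Ioi measurable_const)

theorem Real.hasDerivAt_abs_of_ne_zero {x : ℝ} (hx : x ≠ 0) :
    HasDerivAt (|·|) (Real.sign x) x := by
  rcases hx.lt_or_gt with h | h
  · simpa [Real.sign_of_neg h] using hasDerivAt_abs_neg h
  · simpa [Real.sign_of_pos h] using hasDerivAt_abs_pos h

theorem integral_toDual {Ω E : Type*} [MeasurableSpace Ω] {μ : Measure Ω} [NormedAddCommGroup E]
    [InnerProductSpace ℝ E] [CompleteSpace E] {g : Ω → E} (hg : AEStronglyMeasurable g μ) :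
    ∫ ω, InnerProductSpace.toDual ℝ E (g ω) ∂μ = InnerProductSpace.toDual ℝ E (∫ ω, g ω ∂μ) := by
  by_cases hgi : Integrable g μ
  · exact ContinuousLinearMap.integral_comp_commSL (by simp)
      (InnerProductSpace.toDual ℝ E).toContinuousLinearEquiv.toContinuousLinearMap hgi
  · have : ¬Integrable (fun ω ↦ InnerProductSpace.toDual ℝ E (g ω)) μ := fun h ↦
      hgi ((integrable_norm_iff hg).1 (by simpa using h.norm))
    rw [integral_undef hgi, integral_undef this, map_zero]

theorem integral_mul_sub_sq {Ω : Type*} [MeasurableSpace Ω] {P : Measure Ω}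
    [IsProbabilityMeasure P] {X : Ω → ℝ} (hX : MemLp X 2 P) (S0 γ t : ℝ) :
    ∫ ω, (X ω * S0 - γ * ((X ω - t) * S0) ^ 2) ∂P =
      S0 * ∫ ω, X ω ∂P - γ * S0 ^ 2 * ((∫ ω, X ω ^ 2 ∂P) - 2 * t * ∫ ω, X ω ∂P + t ^ 2) := by
  have h1 := hX.integrable one_le_two
  have h2 := hX.integrable_sq
  have hexpand : ∀ ω, X ω * S0 - γ * ((X ω - t) * S0) ^ 2 =
      (S0 + 2 * γ * S0 ^ 2 * t) * X ω - γ * S0 ^ 2 * X ω ^ 2 - γ * S0 ^ 2 * t ^ 2 := fun ω ↦ by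
    ring
  simp_rw [hexpand]
  rw [integral_sub, integral_sub, integral_const_mul, integral_const_mul, integral_const]
  · simp only [probReal_univ, smul_eq_mul, one_mul]; ring
  all_goals fun_prop

theorem hasDerivAt_integral_mul_sub_sq {Ω : Type*} [MeasurableSpace Ω] {P : Measure Ω}
    [IsProbabilityMeasure P] {X : Ω → ℝ} (hX : MemLp X 2 P) (S0 γ θ : ℝ) :
    HasDerivAt (fun t ↦ ∫ ω, (X ω * S0 - γ * ((X ω - t) * S0) ^ 2) ∂P)
      (2 * γ * S0 ^ 2 * ((∫ ω, X ω ∂P) - θ)) θ := by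
  simp only [integral_mul_sub_sq hX]
  refine ((((hasDerivAt_id' θ).const_mul 2).mul_const _).const_sub _ |>.add (hasDerivAt_pow 2 θ)
    |>.const_mul (γ * S0 ^ 2) |>.const_sub _).congr_deriv ?_
  simp only [mul_one, Nat.cast_ofNat, Nat.add_one_sub_one, pow_one]; ring

section LipschitzRandomField

variable {Ω E : Type*} [MeasurableSpace Ω] {μ : Measure Ω} [NormedAddCommGroup E]
  {X : E → Ω → ℝ} {L : Ω → ℝ} {x₀ : E}

theorem hasFDerivAt_integral_of_lipschitzAt [NormedSpace ℝ E] {X' : Ω → StrongDual ℝ E}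
    (hXm : ∀ x, AEStronglyMeasurable (X x) μ) (hX₀ : Integrable (X x₀) μ)
    (hX' : AEStronglyMeasurable X' μ) (hL : Integrable L μ)
    (hlip : ∀ᵐ ω ∂μ, ∀ x, |X x ω - X x₀ ω| ≤ L ω * ‖x - x₀‖)
    (hderiv : ∀ᵐ ω ∂μ, HasFDerivAt (X · ω) (X' ω) x₀) :
    Integrable X' μ ∧ HasFDerivAt (fun x ↦ ∫ ω, X x ω ∂μ) (∫ ω, X' ω ∂μ) x₀ :=
  hasFDerivAt_integral_of_dominated_loc_of_lip' Filter.univ_mem (fun x _ ↦ hXm x) hX₀ hX'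
    (hlip.mono fun _ h x _ ↦ h x) hL hderiv

theorem hasFDerivAt_integral_sq_of_lipschitzAt [NormedSpace ℝ E] {X' : Ω → StrongDual ℝ E}
    (hXm : ∀ x, AEStronglyMeasurable (X x) μ) (hX₀ : MemLp (X x₀) 2 μ)
    (hX' : AEStronglyMeasurable X' μ) (hL : MemLp L 2 μ)
    (hlip : ∀ᵐ ω ∂μ, ∀ x, |X x ω - X x₀ ω| ≤ L ω * ‖x - x₀‖)
    (hderiv : ∀ᵐ ω ∂μ, HasFDerivAt (X · ω) (X' ω) x₀) :
    Integrable (fun ω ↦ (2 * X x₀ ω) • X' ω) μ ∧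
      HasFDerivAt (fun x ↦ ∫ ω, X x ω ^ 2 ∂μ) (∫ ω, (2 * X x₀ ω) • X' ω ∂μ) x₀ := by
  refine hasFDerivAt_integral_of_dominated_loc_of_lip' (Metric.ball_mem_nhds x₀ one_pos)
    (bound := fun ω ↦ 2 * (L ω * |X x₀ ω|) + L ω ^ 2) (fun x _ ↦ (hXm x).pow 2)
    hX₀.integrable_sq ((hX₀.aestronglyMeasurable.const_mul 2).smul hX') ?_
    (((hL.integrable_mul hX₀.abs).const_mul 2).add hL.integrable_sq) ?_
  · filter_upwards [hlip] with ω h x hx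
    have hx1 : ‖x - x₀‖ ≤ 1 := (mem_ball_iff_norm.mp hx).le
    have hδ := norm_nonneg (x - x₀)
    have hd := h x
    rw [Real.norm_eq_abs, show X x ω ^ 2 - X x₀ ω ^ 2 =
      (X x ω - X x₀ ω) * (X x ω - X x₀ ω + 2 * X x₀ ω) by ring, abs_mul]
    calc |X x ω - X x₀ ω| * |X x ω - X x₀ ω + 2 * X x₀ ω|
        ≤ (L ω * ‖x - x₀‖) * (L ω * ‖x - x₀‖ + 2 * |X x₀ ω|) := by
          refine mul_le_mul hd ?_ (abs_nonneg _) ((abs_nonneg _).trans hd)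
          grw [abs_add_le, abs_mul, abs_two, hd]
      _ ≤ (2 * (L ω * |X x₀ ω|) + L ω ^ 2) * ‖x - x₀‖ := by
          nlinarith [mul_nonneg (mul_nonneg (sq_nonneg (L ω)) hδ) (sub_nonneg.mpr hx1)]
  · filter_upwards [hderiv] with ω h
    simpa using h.pow 2

variable [IsProbabilityMeasure μ]

theorem differentiableAt_integral_mul_sub_sq [NormedSpace ℝ E] {X' : Ω → StrongDual ℝ E}
    (hX : ∀ x, MemLp (X x) 2 μ) (hX' : AEStronglyMeasurable X' μ) (hL : MemLp L 2 μ)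
    (hlip : ∀ᵐ ω ∂μ, ∀ x, |X x ω - X x₀ ω| ≤ L ω * ‖x - x₀‖)
    (hderiv : ∀ᵐ ω ∂μ, HasFDerivAt (X · ω) (X' ω) x₀) (S0 γ θ : ℝ) :
    DifferentiableAt ℝ (fun p : E × ℝ ↦ ∫ ω, (X p.1 ω * S0 - γ * ((X p.1 ω - p.2) * S0) ^ 2) ∂μ)
      (x₀, θ) := by
  have hd1 := ((hasFDerivAt_integral_of_lipschitzAt (fun x ↦ (hX x).1)
    ((hX x₀).integrable one_le_two) hX' (hL.integrable one_le_two) hlip hderiv).2.differentiableAt)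
    |>.comp (f := Prod.fst) (x₀, θ) differentiableAt_fst
  have hd2 := ((hasFDerivAt_integral_sq_of_lipschitzAt (fun x ↦ (hX x).1) (hX x₀) hX' hL hlip
    hderiv).2.differentiableAt).comp (f := Prod.fst) (x₀, θ) differentiableAt_fst
  simp only [Function.comp_def] at hd1 hd2
  simp only [integral_mul_sub_sq (hX _)]
  fun_prop

theorem hasGradientAt_integral_mul_sub_sq [InnerProductSpace ℝ E] [CompleteSpace E] {g : Ω → E}
    (hX : ∀ x, MemLp (X x) 2 μ) (hg : AEStronglyMeasurable g μ) (hL : MemLp L 2 μ)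
    (hlip : ∀ᵐ ω ∂μ, ∀ x, |X x ω - X x₀ ω| ≤ L ω * ‖x - x₀‖)
    (hderiv : ∀ᵐ ω ∂μ, HasGradientAt (X · ω) (g ω) x₀) (S0 γ θ : ℝ) :
    HasGradientAt (fun x ↦ ∫ ω, (X x ω * S0 - γ * ((X x ω - θ) * S0) ^ 2) ∂μ)
      (∫ ω, (S0 * (1 - 2 * γ * S0 * (X x₀ ω - θ))) • g ω ∂μ) x₀ := by
  set T := InnerProductSpace.toDual ℝ E
  have hTg : AEStronglyMeasurable (fun ω ↦ T (g ω)) μ := T.continuous.comp_aestronglyMeasurable hg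
  obtain ⟨hint1, h1⟩ := hasFDerivAt_integral_of_lipschitzAt (fun x ↦ (hX x).1)
    ((hX x₀).integrable one_le_two) hTg (hL.integrable one_le_two) hlip hderiv
  obtain ⟨hint2, h2⟩ := hasFDerivAt_integral_sq_of_lipschitzAt (fun x ↦ (hX x).1) (hX x₀) hTg hL
    hlip hderiv
  simp only [integral_mul_sub_sq (hX _), hasGradientAt_iff_hasFDerivAt]
  refine ((h1.const_mul S0).sub (((h2.sub (h1.const_mul (2 * θ))).add_const (θ ^ 2)).const_mul
    (γ * S0 ^ 2))).congr_fderiv ?_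
  have ha : AEStronglyMeasurable (fun ω ↦ S0 * (1 - 2 * γ * S0 * (X x₀ ω - θ))) μ := by
    have := (hX x₀).1
    fun_prop
  symm
  calc T (∫ ω, (S0 * (1 - 2 * γ * S0 * (X x₀ ω - θ))) • g ω ∂μ)
      = ∫ ω, (S0 * (1 - 2 * γ * S0 * (X x₀ ω - θ))) • T (g ω) ∂μ := by
        rw [← integral_toDual (ha.fun_smul hg)]
        simp [T]
    _ = ∫ ω, ((S0 + 2 * γ * S0 ^ 2 * θ) • T (g ω) - (γ * S0 ^ 2) • ((2 * X x₀ ω) • T (g ω))) ∂μ :=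
        integral_congr_ae (ae_of_all _ fun ω ↦ by module)
    _ = _ := by
        rw [integral_sub (hint1.fun_smul _) (hint2.fun_smul _), integral_smul, integral_smul]
        module

end LipschitzRandomField

section Portfolio

variable {Ω : Type*} {m q : ℕ} (V0 ν : ℝ) (D : Ω → EuclideanSpace ℝ (Fin m))
  (K : Fin q → Ω → EuclideanSpace ℝ (Fin m))

theorem abs_Rport_sub_le (b b' : EuclideanSpace ℝ (Fin m)) (ω : Ω) :
    |Rport V0 ν D K b ω - Rport V0 ν D K b' ω| ≤ (‖D ω‖ + |ν| * ∑ j, ‖K j ω‖) * ‖b - b'‖ := by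
  have hK : ∀ j, |(|⟪K j ω, b⟫_ℝ| - |⟪K j ω, b'⟫_ℝ|)| ≤ ‖K j ω‖ * ‖b - b'‖ := fun j ↦
    (abs_abs_sub_abs_le_abs_sub _ _).trans <| by
      rw [← inner_sub_right]; exact abs_real_inner_le_norm _ _
  calc |Rport V0 ν D K b ω - Rport V0 ν D K b' ω|
      = |⟪D ω, b - b'⟫_ℝ - ν * ∑ j, (|⟪K j ω, b⟫_ℝ| - |⟪K j ω, b'⟫_ℝ|)| := by
        simp only [Rport, inner_sub_right, Finset.sum_sub_distrib]; ring_nf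
    _ ≤ |⟪D ω, b - b'⟫_ℝ| + |ν| * ∑ j, |(|⟪K j ω, b⟫_ℝ| - |⟪K j ω, b'⟫_ℝ|)| := by
        grw [abs_sub, abs_mul, Finset.abs_sum_le_sum_abs]
    _ ≤ ‖D ω‖ * ‖b - b'‖ + |ν| * ∑ j, ‖K j ω‖ * ‖b - b'‖ := by
        grw [abs_real_inner_le_norm, Finset.sum_le_sum fun j _ ↦ hK j]
    _ = (‖D ω‖ + |ν| * ∑ j, ‖K j ω‖) * ‖b - b'‖ := by rw [← Finset.sum_mul]; ring

theorem hasGradientAt_Rport {β : EuclideanSpace ℝ (Fin m)} {ω : Ω}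
    (hβ : ∀ j, ⟪K j ω, β⟫_ℝ ≠ 0) :
    HasGradientAt (Rport V0 ν D K · ω) (D ω - ν • ∑ j, Real.sign ⟪K j ω, β⟫_ℝ • K j ω) β := by
  rw [hasGradientAt_iff_hasFDerivAt]
  have habs : ∀ j, HasFDerivAt (fun b ↦ |⟪K j ω, b⟫_ℝ|)
      (Real.sign ⟪K j ω, β⟫_ℝ • innerSL ℝ (K j ω)) β := fun j ↦
    (Real.hasDerivAt_abs_of_ne_zero (hβ j)).comp_hasFDerivAt β (innerSL ℝ (K j ω)).hasFDerivAt
  refine (((innerSL ℝ (D ω)).hasFDerivAt.const_add V0).sub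
    ((HasFDerivAt.fun_sum fun j _ ↦ habs j).const_mul ν)).congr_fderiv ?_
  ext h
  simp [Finset.mul_sum]

variable [MeasurableSpace Ω] {P : Measure Ω} {K}

theorem ae_hasGradientAt_Rport {β : EuclideanSpace ℝ (Fin m)}
    (hβ : ∀ j, P {ω | ⟪K j ω, β⟫_ℝ = 0} = 0) :
    ∀ᵐ ω ∂P, HasGradientAt (Rport V0 ν D K · ω)
      (D ω - ν • ∑ j, Real.sign ⟪K j ω, β⟫_ℝ • K j ω) β := by
  have hne : ∀ᵐ ω ∂P, ∀ j, ⟪K j ω, β⟫_ℝ ≠ 0 := ae_all_iff.2 fun j ↦ ae_iff.2 (by simpa using hβ j)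
  filter_upwards [hne] with ω hω using hasGradientAt_Rport V0 ν D K hω

theorem memLp_Rport [IsFiniteMeasure P] (hD : MemLp D 2 P) (hK : ∀ j, MemLp (K j) 2 P)
    (b : EuclideanSpace ℝ (Fin m)) : MemLp (Rport V0 ν D K b) 2 P := by
  have h1 : MemLp (fun ω ↦ ⟪D ω, b⟫_ℝ) 2 P := hD.inner_const b
  have h2 : MemLp (fun ω ↦ ∑ j, |⟪K j ω, b⟫_ℝ|) 2 P :=
    memLp_finsetSum (f := fun j ω ↦ |⟪K j ω, b⟫_ℝ|) _ fun j _ ↦ ((hK j).inner_const b).abs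
  exact ((memLp_const V0).add h1).sub (h2.const_mul ν)

end Portfolio

theorem stmt12_general {Ω : Type*} [MeasurableSpace Ω] (P : Measure Ω) [IsProbabilityMeasure P]
    {m q : ℕ}
    (V0 S0 ν : ℝ)
    (D : Ω → EuclideanSpace ℝ (Fin m)) (K : Fin q → Ω → EuclideanSpace ℝ (Fin m))
    (hD : ∀ p : ℕ, 1 ≤ p → MemLp D (p : ENNReal) P)
    (hK : ∀ j, ∀ p : ℕ, 1 ≤ p → MemLp (K j) (p : ENNReal) P)
    (Z : Set (EuclideanSpace ℝ (Fin m)))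
    (hZ : ∀ β ∈ Z, ∀ j, P {ω | ⟪K j ω, β⟫_ℝ = 0} = 0)
    (γ : ℝ) :
    ∀ β ∈ Z, ∀ θ : ℝ,
      DifferentiableAt ℝ
        (fun p : EuclideanSpace ℝ (Fin m) × ℝ => Gobj P V0 S0 ν D K γ p.1 p.2) (β, θ) ∧
      HasGradientAt (fun b : EuclideanSpace ℝ (Fin m) => Gobj P V0 S0 ν D K γ b θ)
        (∫ ω, (S0 * (1 - 2 * γ * S0 * (Rport V0 ν D K β ω - θ))) •
          (D ω - ν • ∑ j, Real.sign ⟪K j ω, β⟫_ℝ • K j ω) ∂P) β ∧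
      HasDerivAt (fun t : ℝ => Gobj P V0 S0 ν D K γ β t)
        (2 * γ * S0 ^ 2 * ((∫ ω, Rport V0 ν D K β ω ∂P) - θ)) θ := by
  intro β hβ θ
  have hD2 : MemLp D 2 P := by exact_mod_cast hD 2 one_le_two
  have hK2 : ∀ j, MemLp (K j) 2 P := fun j ↦ by exact_mod_cast hK j 2 one_le_two
  have hR := memLp_Rport V0 ν D hD2 hK2
  have hL : MemLp (fun ω ↦ ‖D ω‖ + |ν| * ∑ j, ‖K j ω‖) 2 P :=
    hD2.norm.add ((memLp_finsetSum _ fun j _ ↦ (hK2 j).norm).const_mul |ν|)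
  have hlip := ae_of_all P fun ω b ↦ abs_Rport_sub_le V0 ν D K b β ω
  have hgrad : AEStronglyMeasurable (fun ω ↦ D ω - ν • ∑ j, Real.sign ⟪K j ω, β⟫_ℝ • K j ω) P :=
    hD2.1.sub <| AEStronglyMeasurable.const_smul (Finset.aestronglyMeasurable_fun_sum _ fun j _ ↦
      (Real.measurable_sign.comp_aemeasurable ((hK2 j).inner_const β).1.aemeasurable)
        |>.aestronglyMeasurable.smul (hK2 j).1) ν
  have hderiv := ae_hasGradientAt_Rport V0 ν D (hZ β hβ)
  exact ⟨differentiableAt_integral_mul_sub_sq hR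
      ((InnerProductSpace.toDual ℝ _).continuous.comp_aestronglyMeasurable hgrad) hL hlip hderiv
      S0 γ θ,
    hasGradientAt_integral_mul_sub_sq hR hgrad hL hlip hderiv S0 γ θ,
    hasDerivAt_integral_mul_sub_sq (hR β) S0 γ θ⟩

/-- `(β, θ) ↦ G_γ(β, θ)` is differentiable on `Z × ℝ`, with gradient in `β` equal
to `E[(D − ν ∑_j sign(⟨K_j, β⟩) K_j) · S₀ · (1 − 2γS₀(R(β) − θ))]` and partial derivative in `θ`
equal to `2γS₀²(E[R(β)] − θ)`. -/
theorem stmt12 {Ω : Type*} [MeasurableSpace Ω] (P : Measure Ω) [IsProbabilityMeasure P]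
    {m q : ℕ} (hm : 0 < m) (hq : 0 < q)
    (V0 S0 ν : ℝ) (hV0 : 0 < V0) (hS0 : 0 < S0) (hν : 0 ≤ ν)
    (D : Ω → EuclideanSpace ℝ (Fin m)) (K : Fin q → Ω → EuclideanSpace ℝ (Fin m))
    (hD : ∀ p : ℕ, 1 ≤ p → MemLp D (p : ENNReal) P)
    (hK : ∀ j, ∀ p : ℕ, 1 ≤ p → MemLp (K j) (p : ENNReal) P)
    (Z : Set (EuclideanSpace ℝ (Fin m))) (hZopen : IsOpen Z)
    (hZ : ∀ β ∈ Z, ∀ j, P {ω | ⟪K j ω, β⟫_ℝ = 0} = 0)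
    (γ : ℝ) (hγ : 0 < γ) :
    ∀ β ∈ Z, ∀ θ : ℝ,
      DifferentiableAt ℝ
        (fun p : EuclideanSpace ℝ (Fin m) × ℝ => Gobj P V0 S0 ν D K γ p.1 p.2) (β, θ) ∧
      HasGradientAt (fun b : EuclideanSpace ℝ (Fin m) => Gobj P V0 S0 ν D K γ b θ)
        (∫ ω, (S0 * (1 - 2 * γ * S0 * (Rport V0 ν D K β ω - θ))) •
          (D ω - ν • ∑ j, Real.sign ⟪K j ω, β⟫_ℝ • K j ω) ∂P) β ∧
      HasDerivAt (fun t : ℝ => Gobj P V0 S0 ν D K γ β t)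
        (2 * γ * S0 ^ 2 * ((∫ ω, Rport V0 ν D K β ω ∂P) - θ)) θ :=
  stmt12_general P V0 S0 ν D K hD hK Z hZ γ
end
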